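/- arXiv:1807.10313 — 4 statements merged into one kernel-verified Lean document; each statement's English description precedes it below -/
import Mathlib

section
/- Let p be a prime and d an integer with 1 < d < p and p ≡ -1 (mod d). Define τ_p(d) = Σ_{i=0}^{p-1} τ_p(d,i), where τ_p(d,i) is the number of positive integers n ≤ ⌊id/p⌋ such that −n ≡ m·d (mod p) for some integer m with 0 < m ≤ p−1−i. Then τ_p(d) = 0. -/
open scoped Classical in
/-- `tauP p d i` is the number of positive integers `n ≤ ⌊i·d/p⌋` such that
`-n ≡ m·d (mod p)` for some `m` with `0 < m ≤ p - 1 - i`. -/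
noncomputable def tauP (p d i : ℕ) : ℕ :=
  ((Finset.Icc 1 (i * d / p)).filter fun n =>
    ∃ m : ℕ, 0 < m ∧ m ≤ p - 1 - i ∧ (-(n : ZMod p) = ((m * d : ℕ) : ZMod p))).card

/-- `tauPSum p d = Σ_{i=0}^{p-1} tauP p d i`. -/
noncomputable def tauPSum (p d : ℕ) : ℕ := ∑ i ∈ Finset.range p, tauP p d i

/-!
If `n` is counted by `τ_p(d, i)`, write `m d + n = p t`. Reducing mod `d` with `p ≡ -1` gives
`d ∣ n + t`, so `t ≥ d - n`, and then `p (d - n) ≤ p t ≤ (p - 1 - i) d + n` forces `d ≤ n`.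
But `n p ≤ i d < p d` gives `n < d`.
-/

theorem dvd_add_of_mul_add_eq_mul {p d m n t : ℕ} (hmod : (p : ZMod d) = -1)
    (ht : m * d + n = p * t) : d ∣ n + t := by
  rw [← ZMod.natCast_eq_zero_iff]
  have hcast : (m * d + n : ZMod d) = p * t := by
    exact_mod_cast congrArg (Nat.cast : ℕ → ZMod d) ht
  push_cast
  linear_combination hcast - (m : ZMod d) * ZMod.natCast_self d + (t : ZMod d) * hmod

theorem neg_natCast_ne_of_mul_le {p d i n m : ℕ} (hmod : (p : ZMod d) = -1) (hi : i < p)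
    (hn : 0 < n) (hnp : n * p ≤ i * d) (hmi : m ≤ p - 1 - i) :
    -(n : ZMod p) ≠ ((m * d : ℕ) : ZMod p) := by
  intro hneg
  obtain ⟨t, ht⟩ : p ∣ m * d + n := by
    rw [← ZMod.natCast_eq_zero_iff]
    push_cast at hneg ⊢
    linear_combination -hneg
  have hdnt : d ≤ n + t := Nat.le_of_dvd (by omega) (dvd_add_of_mul_add_eq_mul hmod ht)
  have hnd : n < d := by nlinarith
  have hpd : p * d ≤ p * n + m * d + n := by nlinarith [Nat.mul_le_mul_left p hdnt]
  have hmid : (m + i + 1) * d ≤ p * d := Nat.mul_le_mul_right d (by omega)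
  nlinarith

theorem tauP_eq_zero {p d i : ℕ} (hi : i < p) (hmod : (p : ZMod d) = -1) : tauP p d i = 0 := by
  rw [tauP, Finset.card_eq_zero, Finset.eq_empty_iff_forall_notMem]
  -- `tauP` filters the image of `Icc 1 (i * d / p)` in `ZMod p`.
  intro x hx
  simp only [Finset.pure_def, Finset.bind_def, Finset.sup_singleton_apply, Finset.mem_filter,
    Finset.mem_image, Finset.mem_Icc] at hx
  obtain ⟨⟨n, ⟨hn, hnid⟩, rfl⟩, m, -, hmi, hneg⟩ := hx
  exact neg_natCast_ne_of_mul_le hmod hi hn ((Nat.le_div_iff_mul_le (by omega)).mp hnid) hmi hneg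

theorem tauPSum_eq_zero_of_neg_one_mod_general (p d : ℕ) (hmod : (p : ZMod d) = -1) :
    tauPSum p d = 0 :=
  Finset.sum_eq_zero fun _ hi => tauP_eq_zero (Finset.mem_range.mp hi) hmod

/-- If `p` is prime, `1 < d < p` and `p ≡ -1 (mod d)`, then `τ_p(d) = 0`. -/
theorem tauPSum_eq_zero_of_neg_one_mod (p d : ℕ) (hp : p.Prime) (h1 : 1 < d)
    (h2 : d < p) (hmod : (p : ZMod d) = -1) :
    tauPSum p d = 0 :=
  tauPSum_eq_zero_of_neg_one_mod_general p d hmod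
end

section
/- Let p be a prime and d an integer with 1 < d < p and p ≡ 1 (mod d). With τ_p(d) = Σ_{i=0}^{p-1} τ_p(d,i) as defined, one has τ_p(d) = ⌊(d-1)²/4⌋ · (p-1)/d. -/
/-! Write `p = k d + 1`. As `k d ≡ -1 (mod p)`, the congruence `-n ≡ m d` means `m ≡ n k`, and
for `0 < n < d` the only admissible `m` is `n k` itself; moreover `n ≤ ⌊i d / p⌋` amounts to
`n < d ∧ n k < i`. So `τ_p(d, i)` counts the `n ∈ (0, d)` with `n k < i ≤ p - 1 - n k`. Counting
over `i` first, each `n` contributes `(d - 2n)⁺ k`, and `∑_{0<n<d} (d - 2n)⁺ = ⌊(d - 1)² / 4⌋`. -/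

open Finset

theorem Nat.sum_range_sub_two_mul_add_one (D : ℕ) :
    ∑ j ∈ range D, (D - (2 * j + 1)) = D ^ 2 / 4 := by
  induction D using Nat.twoStepInduction with
  | zero => simp
  | one => simp
  | more D ih _ =>
    have hshift : ∀ j, D + 2 - (2 * (j + 1) + 1) = D - (2 * j + 1) := fun j => by omega
    rw [sum_range_succ', sum_congr rfl fun j _ => hshift j, sum_range_succ, ih,
      show (D + 2) ^ 2 = D ^ 2 + (D + 1) * 4 by ring, Nat.add_mul_div_right _ _ four_pos]
    omega

theorem Nat.sum_Ioo_sub_two_mul (d : ℕ) : ∑ n ∈ Ioo 0 d, (d - 2 * n) = (d - 1) ^ 2 / 4 := by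
  rw [← Ico_add_one_left_eq_Ioo, sum_Ico_eq_sum_range, ← Nat.sum_range_sub_two_mul_add_one]
  exact sum_congr rfl fun j _ => by omega

theorem Nat.card_filter_lt_and_add_le (N A : ℕ) :
    #{i ∈ range (N + 1) | A < i ∧ i + A ≤ N} = N - 2 * A := by
  have hIcc : {i ∈ range (N + 1) | A < i ∧ i + A ≤ N} = Icc (A + 1) (N - A) := by
    ext i
    simp only [mem_filter, mem_range, mem_Icc]
    omega
  rw [hIcc, Nat.card_Icc]
  omega

theorem Nat.le_div_mul_add_one_iff {k d i n : ℕ} (hn : 0 < n) (hi : i ≤ k * d) :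
    n ≤ i * d / (k * d + 1) ↔ n < d ∧ n * k < i := by
  rw [Nat.le_div_iff_mul_le (Nat.succ_pos _)]
  constructor
  · intro h
    refine ⟨?_, Nat.lt_of_mul_lt_mul_right (a := d) (by nlinarith)⟩
    by_contra! hdn
    nlinarith
  · rintro ⟨hnd, hni⟩
    nlinarith

theorem neg_natCast_eq_natCast_mul_iff (k d m n : ℕ) :
    -(n : ZMod (k * d + 1)) = ((m * d : ℕ) : ZMod (k * d + 1)) ↔
      (m : ZMod (k * d + 1)) = ((n * k : ℕ) : ZMod (k * d + 1)) := by
  have hkd : (k : ZMod (k * d + 1)) * d + 1 = 0 := by exact_mod_cast ZMod.natCast_self (k * d + 1)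
  push_cast
  constructor
  · intro h
    linear_combination (k : ZMod (k * d + 1)) * h + (m : ZMod (k * d + 1)) * hkd
  · intro h
    linear_combination -(d : ZMod (k * d + 1)) * h - (n : ZMod (k * d + 1)) * hkd

theorem exists_neg_natCast_eq_natCast_mul_iff {k d i n : ℕ} (hn : n * k < k * d + 1) :
    (∃ m : ℕ, 0 < m ∧ m ≤ k * d + 1 - 1 - i ∧
        -(n : ZMod (k * d + 1)) = ((m * d : ℕ) : ZMod (k * d + 1))) ↔
      0 < n * k ∧ n * k ≤ k * d - i := by
  simp only [neg_natCast_eq_natCast_mul_iff, ZMod.natCast_eq_natCast_iff', Nat.add_sub_cancel]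
  constructor
  · rintro ⟨m, hm, hmi, hmn⟩
    rw [Nat.mod_eq_of_lt hn, Nat.mod_eq_of_lt (by omega)] at hmn
    exact hmn ▸ ⟨hm, hmi⟩
  · exact fun h => ⟨n * k, h.1, h.2, rfl⟩

open scoped Classical in
/-- The filter in `tauP` runs over the image of `Icc 1 (i * d / p)` in `ZMod p` (the cast on `n`
is elaborated through the `Finset` monad); the cast is injective there as soon as `d ≤ p`. -/
theorem tauP_eq_card_filter_Icc {p d i : ℕ} (hdp : d ≤ p) (hi : i < p) :
    tauP p d i = #{n ∈ Icc 1 (i * d / p) |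
      ∃ m : ℕ, 0 < m ∧ m ≤ p - 1 - i ∧ -((n : ℕ) : ZMod p) = ((m * d : ℕ) : ZMod p)} := by
  have hlt {n : ℕ} (hn : n ∈ Icc 1 (i * d / p)) : n < p :=
    (mem_Icc.1 hn).2.trans_lt <| Nat.div_lt_of_lt_mul (Nat.mul_lt_mul_of_lt_of_le hi hdp (by omega))
  have hinj : Set.InjOn (Nat.cast : ℕ → ZMod p) (Icc 1 (i * d / p)) := fun a ha b hb hab => by
    rwa [ZMod.natCast_eq_natCast_iff', Nat.mod_eq_of_lt (hlt ha), Nat.mod_eq_of_lt (hlt hb)] at hab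
  rw [tauP, bind_pure_comp, fmap_def, ← card_image_of_injOn (hinj.mono (filter_subset _ _))]
  congr 1
  ext x
  simp only [mem_filter, mem_image]
  constructor
  · rintro ⟨⟨a, ha, rfl⟩, hm⟩
    exact ⟨a, ⟨ha, hm⟩, rfl⟩
  · rintro ⟨a, ⟨ha, hm⟩, rfl⟩
    exact ⟨⟨a, ha, rfl⟩, hm⟩

theorem tauP_mul_add_one {k d i : ℕ} (hk : 0 < k) (hi : i ≤ k * d) :
    tauP (k * d + 1) d i = #{n ∈ Ioo 0 d | n * k < i ∧ i + n * k ≤ k * d} := by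
  have hnk_lt {n : ℕ} (hnd : n < d) : n * k < k * d + 1 :=
    Nat.lt_succ_of_le (mul_comm d k ▸ Nat.mul_le_mul_right k hnd.le)
  rw [tauP_eq_card_filter_Icc (Nat.le_succ_of_le (Nat.le_mul_of_pos_left d hk)) (by omega)]
  refine congrArg card (ext fun n => ?_)
  simp only [mem_filter, mem_Icc, mem_Ioo]
  constructor
  · rintro ⟨⟨hn, hni⟩, hm⟩
    obtain ⟨hnd, hni⟩ := (Nat.le_div_mul_add_one_iff hn hi).1 hni
    have hnk := ((exists_neg_natCast_eq_natCast_mul_iff (hnk_lt hnd)).1 hm).2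
    omega
  · rintro ⟨⟨hn, hnd⟩, hni, hnk⟩
    refine ⟨⟨hn, (Nat.le_div_mul_add_one_iff hn hi).2 ⟨hnd, hni⟩⟩,
      (exists_neg_natCast_eq_natCast_mul_iff (hnk_lt hnd)).2 ⟨Nat.mul_pos hn hk, by omega⟩⟩

theorem tauPSum_mul_add_one (k d : ℕ) : tauPSum (k * d + 1) d = (d - 1) ^ 2 / 4 * k := by
  rcases k.eq_zero_or_pos with rfl | hk
  · simp [tauPSum, tauP]
  calc tauPSum (k * d + 1) d
      = ∑ i ∈ range (k * d + 1), #{n ∈ Ioo 0 d | n * k < i ∧ i + n * k ≤ k * d} :=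
        sum_congr rfl fun i hi => tauP_mul_add_one hk (Nat.lt_succ_iff.1 (mem_range.1 hi))
    _ = ∑ n ∈ Ioo 0 d, #{i ∈ range (k * d + 1) | n * k < i ∧ i + n * k ≤ k * d} := by
        simp only [card_filter]
        exact sum_comm
    _ = ∑ n ∈ Ioo 0 d, (d - 2 * n) * k := sum_congr rfl fun n _ => by
        rw [Nat.card_filter_lt_and_add_le, Nat.sub_mul, mul_comm k d, mul_assoc]
    _ = (d - 1) ^ 2 / 4 * k := by rw [← sum_mul, Nat.sum_Ioo_sub_two_mul]

theorem tauPSum_of_one_mod_general (p d : ℕ) (h1 : 1 < d) (hmod : (p : ZMod d) = 1) :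
    tauPSum p d = (d - 1) ^ 2 / 4 * ((p - 1) / d) := by
  have hpd : p % d = 1 := by
    rw [← Nat.mod_eq_of_lt h1, ← ZMod.natCast_eq_natCast_iff', hmod, Nat.cast_one]
  obtain ⟨k, rfl⟩ : ∃ k, p = k * d + 1 := ⟨p / d, by rw [← hpd, Nat.div_add_mod']⟩
  rw [tauPSum_mul_add_one, Nat.add_sub_cancel, Nat.mul_div_cancel _ (by omega)]

/-- If `p` is prime, `1 < d < p` and `p ≡ 1 (mod d)`, then
`τ_p(d) = ⌊(d-1)²/4⌋ · (p-1)/d`. -/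
theorem tauPSum_of_one_mod (p d : ℕ) (hp : p.Prime) (h1 : 1 < d)
    (h2 : d < p) (hmod : (p : ZMod d) = 1) :
    tauPSum p d = (d - 1) ^ 2 / 4 * ((p - 1) / d) :=
  tauPSum_of_one_mod_general p d h1 hmod
end

section
/- Let p be an odd prime, d a positive integer with p ∤ d, and for 1 ≤ j ≤ p−1 define L_j(d) = Σ_{i=j}^{p-1} ( ⌊id/p⌋ − ⌊id/p − (1−1/p)·(jd/p)⌋ ). Then L_j(d) ≥ (1 − 1/p)·( (d/p)·(p−j)·j − (p−j) ). -/
/-! Each term is at least `c - (p - 1)/p`, where `c = (1 - 1/p)·jd/p`: the number `id/p` has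
denominator `p`, so it exceeds its floor by at most `(p - 1)/p`, while `⌊id/p - c⌋ ≤ id/p - c`.
Summing over the `p - j` values of `i` gives `(p - j)(c - (p - 1)/p)`, which is the bound. -/

section FloorBounds

variable {α : Type*} [Field α] [LinearOrder α] [IsStrictOrderedRing α] [FloorRing α]

theorem Int.intCast_div_natCast_sub_le_floor (m : ℤ) {n : ℕ} (hn : 0 < n) :
    (m : α) / n - (n - 1) / n ≤ ⌊(m : α) / n⌋ := by
  rw [Int.floor_div_natCast, Int.floor_intCast, div_sub_div_same,
    div_le_iff₀ (by exact_mod_cast hn)]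
  have hmod : m % n ≤ n - 1 := by
    have hlt := Int.emod_lt_of_pos m (by omega : (0 : ℤ) < n)
    omega
  have hmod' : ((m % n : ℤ) : α) ≤ n - 1 := by exact_mod_cast hmod
  have hdecomp : (m : α) = n * (m / n : ℤ) + (m % n : ℤ) := by
    exact_mod_cast (Int.mul_ediv_add_emod m n).symm
  rw [hdecomp]
  linarith

theorem Int.sub_le_floor_sub_floor_sub {x δ : α} (c : α) (hx : x - δ ≤ ⌊x⌋) :
    c - δ ≤ ((⌊x⌋ - ⌊x - c⌋ : ℤ) : α) := by
  have hfloor := Int.floor_le (x - c)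
  push_cast
  linarith

end FloorBounds

theorem Lj_lower_bound_general (p d j : ℕ) (hj1 : 1 ≤ j) (hj2 : j ≤ p - 1) :
    ((∑ i ∈ Finset.Icc j (p - 1),
        (⌊((i : ℚ) * d) / p⌋ -
          ⌊((i : ℚ) * d) / p - (1 - 1 / (p : ℚ)) * ((j : ℚ) * d / p)⌋) : ℤ) : ℚ)
      ≥ (1 - 1 / (p : ℚ)) * (((d : ℚ) / p) * ((p : ℚ) - j) * j - ((p : ℚ) - j)) := by
  have hp : 0 < p := by omega
  set c : ℚ := (1 - 1 / (p : ℚ)) * ((j : ℚ) * d / p)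
  have hterm (i : ℕ) : c - ((p : ℚ) - 1) / p ≤
      ((⌊((i : ℚ) * d) / p⌋ - ⌊((i : ℚ) * d) / p - c⌋ : ℤ) : ℚ) := by
    refine Int.sub_le_floor_sub_floor_sub c ?_
    simpa using Int.intCast_div_natCast_sub_le_floor (α := ℚ) ((i * d : ℕ) : ℤ) hp
  calc (1 - 1 / (p : ℚ)) * (((d : ℚ) / p) * ((p : ℚ) - j) * j - ((p : ℚ) - j))
      = ∑ _i ∈ Finset.Icc j (p - 1), (c - ((p : ℚ) - 1) / p) := by
        rw [Finset.sum_const, Nat.card_Icc, Nat.sub_add_cancel hp, nsmul_eq_mul,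
          Nat.cast_sub (by omega)]
        simp only [c]
        field_simp
    _ ≤ _ := by
        rw [Int.cast_sum]
        exact Finset.sum_le_sum fun i _ => hterm i

/-- The lower-bound quantity
`L_j(d) = Σ_{i=j}^{p-1} (⌊id/p⌋ − ⌊id/p − (1−1/p)·jd/p⌋)` satisfies
`L_j(d) ≥ (1−1/p)·((d/p)·(p−j)·j − (p−j))`. -/
theorem Lj_lower_bound (p d j : ℕ) (hp : p.Prime) (hodd : Odd p) (hd : 0 < d)
    (hpd : ¬ p ∣ d) (hj1 : 1 ≤ j) (hj2 : j ≤ p - 1) :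
    ((∑ i ∈ Finset.Icc j (p - 1),
        (⌊((i : ℚ) * d) / p⌋ -
          ⌊((i : ℚ) * d) / p - (1 - 1 / (p : ℚ)) * ((j : ℚ) * d / p)⌋) : ℤ) : ℚ)
      ≥ (1 - 1 / (p : ℚ)) * (((d : ℚ) / p) * ((p : ℚ) - j) * j - ((p : ℚ) - j)) :=
  Lj_lower_bound_general p d j hj1 hj2
end

section
/- Let p be an odd prime, S a finite set, and (d_Q)_{Q∈S} positive integers with p ∤ d_Q. Then Σ_{Q∈S} Σ_{i=⌈(p+1)/2⌉}^{p-1} ( ⌊id_Q/p⌋ − ⌊id_Q/p − (1−1/p)·((p+1)/2)·d_Q/p⌋ ) ≥ (1−1/p)²·( Σ_{Q∈S} (p+1)/4 · d_Q − |S|·p/2 ). -/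
/-!
Termwise, `⌊x⌋ - ⌊x - c⌋ ≥ ⌊x⌋ - x + c`, and for `x = i d / p` with `i, d` natural one has the
sharp bound `⌊x⌋ ≥ x - (p - 1) / p`. Each of the `(p - 1) / 2` indices `i` therefore contributes at
least `c - (p - 1) / p`, and `(p - 1) / 2 · (c - (p - 1) / p)` with `c = (1 - 1/p)(p + 1) d / (2p)`
is exactly `(1 - 1/p)² ((p + 1) d / 4 - p / 2)`.
-/

open Finset

section FloorBounds

variable {K : Type*} [Field K] [LinearOrder K] [IsStrictOrderedRing K] [FloorRing K]

theorem natCast_div_sub_le_floor (n : ℕ) {m : ℕ} (hm : 0 < m) :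
    (n : K) / m - ((m : K) - 1) / m ≤ ⌊(n : K) / m⌋ := by
  have hm' : (0 : K) < m := by exact_mod_cast hm
  rw [← Int.natCast_floor_eq_floor (by positivity), Nat.floor_div_eq_div, div_sub_div_same,
    div_le_iff₀ hm', Int.cast_natCast]
  have hmod : ((n % m : ℕ) : K) + 1 ≤ m := by exact_mod_cast Nat.mod_lt n hm
  have hdecomp : ((m * (n / m) + n % m : ℕ) : K) = n := by rw [Nat.div_add_mod]
  push_cast at hdecomp
  linarith

theorem sub_le_floor_sub_floor_sub (n : ℕ) {m : ℕ} (hm : 0 < m) (c : K) :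
    c - ((m : K) - 1) / m ≤ ⌊(n : K) / m⌋ - ⌊(n : K) / m - c⌋ := by
  have hfloor := natCast_div_sub_le_floor (K := K) n hm
  have hfloor_sub := Int.floor_le ((n : K) / m - c)
  linarith

theorem le_sum_floor_sub_floor {p : ℕ} (hp : Odd p) (d : ℕ) :
    (1 - 1 / (p : K)) ^ 2 * (((p : K) + 1) / 4 * d - p / 2) ≤
      ∑ i ∈ Icc ((p + 1) / 2) (p - 1),
        ((⌊(i : K) * d / p⌋ : K) - ⌊(i : K) * d / p - (1 - 1 / (p : K)) * ((p + 1) / 2) * d / p⌋) := by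
  obtain ⟨k, hk⟩ := hp
  have hcard : #(Icc ((p + 1) / 2) (p - 1)) = k := by
    rw [Nat.card_Icc]; omega
  have hterm (i : ℕ) (_ : i ∈ Icc ((p + 1) / 2) (p - 1)) := sub_le_floor_sub_floor_sub (K := K)
    (i * d) (by omega : 0 < p) ((1 - 1 / (p : K)) * ((p + 1) / 2) * d / p)
  refine le_trans (le_of_eq ?_) (card_nsmul_le_sum _ _ _ (by simpa only [Nat.cast_mul] using hterm))
  rw [hcard, nsmul_eq_mul, hk]
  push_cast
  field_simp
  ring

end FloorBounds

theorem explicit_lower_bound_general {α : Type*} (p : ℕ) (hodd : Odd p)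
    (S : Finset α) (d : α → ℕ) :
    ((∑ Q ∈ S, ∑ i ∈ Finset.Icc ((p + 1) / 2) (p - 1),
        (⌊((i : ℚ) * d Q) / p⌋ -
          ⌊((i : ℚ) * d Q) / p -
            (1 - 1 / (p : ℚ)) * (((p : ℚ) + 1) / 2) * (d Q : ℚ) / p⌋) : ℤ) : ℚ)
      ≥ (1 - 1 / (p : ℚ)) ^ 2 *
          ((∑ Q ∈ S, ((p : ℚ) + 1) / 4 * (d Q : ℚ)) - (S.card : ℚ) * p / 2) := by
  have hsum := sum_le_sum fun Q (_ : Q ∈ S) => le_sum_floor_sub_floor (K := ℚ) hodd (d Q)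
  rw [← mul_sum, sum_sub_distrib, sum_const, nsmul_eq_mul] at hsum
  push_cast
  linarith

/-- The explicit lower bound of Corollary 1.5 (with `j = (p+1)/2`):
`Σ_{Q∈S} Σ_{i=(p+1)/2}^{p-1} (⌊i d_Q/p⌋ − ⌊i d_Q/p − (1−1/p)·((p+1)/2)·d_Q/p⌋)
  ≥ (1−1/p)²·(Σ_{Q∈S} ((p+1)/4)·d_Q − |S|·p/2)`. -/
theorem explicit_lower_bound {α : Type*} (p : ℕ) (hp : p.Prime) (hodd : Odd p)
    (S : Finset α) (d : α → ℕ) (hd : ∀ Q ∈ S, 0 < d Q ∧ ¬ p ∣ d Q) :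
    ((∑ Q ∈ S, ∑ i ∈ Finset.Icc ((p + 1) / 2) (p - 1),
        (⌊((i : ℚ) * d Q) / p⌋ -
          ⌊((i : ℚ) * d Q) / p -
            (1 - 1 / (p : ℚ)) * (((p : ℚ) + 1) / 2) * (d Q : ℚ) / p⌋) : ℤ) : ℚ)
      ≥ (1 - 1 / (p : ℚ)) ^ 2 *
          ((∑ Q ∈ S, ((p : ℚ) + 1) / 4 * (d Q : ℚ)) - (S.card : ℚ) * p / 2) :=
  explicit_lower_bound_general p hodd S d
end
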